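/- (Theorem: uncoded collective optimum equals individual-measurement performance) Let γ ∈ [0,1] and n ≥ 1. Set ρ_0 = ρ₊ and ρ_1 = ρ₋, and for each x ∈ {0,1}^n let σ_x(u, v) = ∏_{j=1}^n (N_γ(ρ_{x_j}))(u_j, v_j), indexed by {0,1}^n × {0,1}^n. Then the supremum, over all POVMs (Λ_x)_{x ∈ {0,1}^n} on ℂ^{2^n}, of the average success probability 2^{−n} · Σ_{x ∈ {0,1}^n} Re Tr(Λ_x σ_x) equals ((1 + √(1−γ))/2)^n, i.e., the n-th power of the optimal single-use success probability. -/

import Mathlib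

open Matrix Complex
open scoped ComplexOrder

/-- Kraus operator `K₀` of the qubit amplitude damping channel. -/
noncomputable def K₀ (γ : ℝ) : Matrix (Fin 2) (Fin 2) ℂ :=
  !![1, 0; 0, (Real.sqrt (1 - γ) : ℂ)]

/-- Kraus operator `K₁` of the qubit amplitude damping channel. -/
noncomputable def K₁ (γ : ℝ) : Matrix (Fin 2) (Fin 2) ℂ :=
  !![0, (Real.sqrt γ : ℂ); 0, 0]

/-- The qubit amplitude damping channel with damping parameter `γ`. -/
noncomputable def ADC (γ : ℝ) (ρ : Matrix (Fin 2) (Fin 2) ℂ) : Matrix (Fin 2) (Fin 2) ℂ :=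
  K₀ γ * ρ * (K₀ γ)ᴴ + K₁ γ * ρ * (K₁ γ)ᴴ

/-- The state `ρ₊ = |+⟩⟨+|`. -/
noncomputable def ρPlus : Matrix (Fin 2) (Fin 2) ℂ := (1/2 : ℂ) • !![1, 1; 1, 1]

/-- The state `ρ₋ = |−⟩⟨−|`. -/
noncomputable def ρMinus : Matrix (Fin 2) (Fin 2) ℂ := (1/2 : ℂ) • !![1, -1; -1, 1]

/-- The encoding `0 ↦ ρ₊`, `1 ↦ ρ₋`. -/
noncomputable def ρbit (i : Fin 2) : Matrix (Fin 2) (Fin 2) ℂ :=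
  if i = 0 then ρPlus else ρMinus

/-- The tensor-product channel output `N_γ(ρ_{x₁}) ⊗ ⋯ ⊗ N_γ(ρ_{xₙ})` for the uncoded word
`x ∈ {0,1}ⁿ`, realized as a matrix indexed by `{0,1}ⁿ` with entrywise products. -/
noncomputable def σout (γ : ℝ) (n : ℕ) (x : Fin n → Fin 2) :
    Matrix (Fin n → Fin 2) (Fin n → Fin 2) ℂ :=
  Matrix.of fun u v => ∏ j, (ADC γ (ρbit (x j))) (u j) (v j)

/-- The tensor-product measurement operator `ρ_{x₁} ⊗ ⋯ ⊗ ρ_{xₙ}` (individual optimal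
single-use measurements). -/
noncomputable def Pind (n : ℕ) (x : Fin n → Fin 2) :
    Matrix (Fin n → Fin 2) (Fin n → Fin 2) ℂ :=
  Matrix.of fun u v => ∏ j, (ρbit (x j)) (u j) (v j)

/-!
The product of the optimal single-qubit measurements, `Λ_x = ρ_{x₁} ⊗ ⋯ ⊗ ρ_{xₙ}`, succeeds with
probability `((1 + √(1-γ)) / 2) ^ n`. Optimality is weak duality for the discrimination SDP: the
matrix `Y = N_γ(ρ₊) + √(1-γ) ρ₋` dominates both `N_γ(ρ₊)` and `N_γ(ρ₋)` (the latter because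
`N_γ(ρ₊ - ρ₋) = √(1-γ) (ρ₊ - ρ₋)`) and has trace `1 + √(1-γ)`. Tensor products of positive
semidefinite matrices being positive semidefinite, `Y^{⊗n}` dominates every `σ_x`, so for any
POVM `∑ₓ Re Tr(Λ_x σ_x) ≤ ∑ₓ Re Tr(Λ_x Y^{⊗n}) = Tr Y^{⊗n} = (1 + √(1-γ)) ^ n`.
-/

section PiKronecker

variable {ι m κ R : Type*} [Fintype ι]

def piKronecker [CommMonoid R] (A : ι → Matrix m m R) : Matrix (ι → m) (ι → m) R :=
  of fun u v => ∏ j, A j (u j) (v j)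

section CommSemiring

variable [CommSemiring R] [DecidableEq ι]

theorem piKronecker_mul [Fintype m] (A B : ι → Matrix m m R) :
    piKronecker A * piKronecker B = piKronecker (A * B) := by
  ext u v
  simp only [piKronecker, mul_apply, of_apply, Pi.mul_apply, Fintype.prod_sum,
    Finset.prod_mul_distrib]

theorem trace_piKronecker [Fintype m] (A : ι → Matrix m m R) :
    (piKronecker A).trace = ∏ j, (A j).trace := by
  simp only [trace, diag, piKronecker, of_apply, Fintype.prod_sum]

theorem sum_piKronecker [Fintype κ] (F : ι → κ → Matrix m m R) :
    ∑ x : ι → κ, piKronecker (fun j => F j (x j)) = piKronecker (fun j => ∑ k, F j k) := by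
  ext u v
  simp only [piKronecker, Matrix.sum_apply, of_apply, Fintype.prod_sum]

end CommSemiring

theorem piKronecker_one [CommSemiring R] [DecidableEq m] :
    piKronecker (fun _ : ι => (1 : Matrix m m R)) = 1 := by
  ext u v
  simp only [piKronecker, of_apply, one_apply, Finset.prod_ite_zero, Finset.prod_const_one,
    funext_iff, Finset.mem_univ, true_imp_iff]

theorem conjTranspose_piKronecker [CommSemiring R] [StarRing R] (A : ι → Matrix m m R) :
    (piKronecker A)ᴴ = piKronecker (fun j => (A j)ᴴ) := by
  ext u v
  simp only [piKronecker, conjTranspose_apply, of_apply, star_prod]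

end PiKronecker

section PosSemidef

variable {ι m 𝕜 : Type*} [Fintype ι] [DecidableEq ι] [Fintype m] [RCLike 𝕜]

open scoped MatrixOrder Matrix.Norms.L2Operator in
theorem Matrix.PosSemidef.exists_eq_conjTranspose_mul_self [DecidableEq m] {A : Matrix m m 𝕜}
    (hA : A.PosSemidef) : ∃ B : Matrix m m 𝕜, A = Bᴴ * B :=
  CStarAlgebra.nonneg_iff_eq_star_mul_self.mp hA.nonneg

theorem Matrix.PosSemidef.piKronecker {A : ι → Matrix m m 𝕜} (hA : ∀ j, (A j).PosSemidef) :
    (piKronecker A).PosSemidef := by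
  classical
  choose B hB using fun j => (hA j).exists_eq_conjTranspose_mul_self
  rw [funext hB, show (fun j => (B j)ᴴ * B j) = (fun j => (B j)ᴴ) * B from rfl,
    ← piKronecker_mul, ← conjTranspose_piKronecker]
  exact posSemidef_conjTranspose_mul_self _

theorem posSemidef_piKronecker_sub_piKronecker {A Y : ι → Matrix m m 𝕜}
    (hA : ∀ j, (A j).PosSemidef) (hYA : ∀ j, (Y j - A j).PosSemidef) :
    (piKronecker Y - piKronecker A).PosSemidef := by
  -- `Y j = A j + (Y j - A j)` expands `piKronecker Y` into `2 ^ card ι` tensor products of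
  -- positive semidefinite matrices, one of which is `piKronecker A`.
  set F : ι → Fin 2 → Matrix m m 𝕜 := fun j => ![A j, Y j - A j]
  have hY : piKronecker Y = ∑ x : ι → Fin 2, piKronecker (fun j => F j (x j)) := by
    simp [F, sum_piKronecker, Fin.sum_univ_two]
  have hF : ∀ j k, (F j k).PosSemidef := fun j => Fin.forall_fin_two.mpr ⟨hA j, hYA j⟩
  rw [hY, ← Finset.add_sum_erase _ _ (Finset.mem_univ 0),
    show piKronecker (fun j => F j ((0 : ι → Fin 2) j)) = piKronecker A from rfl,
    add_sub_cancel_left]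
  exact posSemidef_sum _ fun x _ => .piKronecker fun j => hF j (x j)

theorem re_trace_mul_nonneg {A B : Matrix m m ℂ} (hA : A.PosSemidef) (hB : B.PosSemidef) :
    0 ≤ (A * B).trace.re := by
  classical
  obtain ⟨C, rfl⟩ := hB.exists_eq_conjTranspose_mul_self
  rw [← Matrix.mul_assoc, trace_mul_cycle]
  exact (Complex.nonneg_iff.mp (hA.mul_mul_conjTranspose_same C).trace_nonneg).1

end PosSemidef

theorem sum_re_trace_mul_le_re_trace {ι m : Type*} [Fintype ι] [Fintype m] [DecidableEq m]
    {Λ σ : ι → Matrix m m ℂ} {Y : Matrix m m ℂ} (hΛ : ∀ x, (Λ x).PosSemidef)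
    (hΛ_sum : ∑ x, Λ x = 1) (hY : ∀ x, (Y - σ x).PosSemidef) :
    ∑ x, (Λ x * σ x).trace.re ≤ Y.trace.re :=
  calc ∑ x, (Λ x * σ x).trace.re ≤ ∑ x, (Λ x * Y).trace.re :=
        Finset.sum_le_sum fun x _ => by
          have := re_trace_mul_nonneg (hΛ x) (hY x)
          rw [Matrix.mul_sub, trace_sub, Complex.sub_re] at this
          linarith
    _ = Y.trace.re := by rw [← Complex.re_sum, ← trace_sum, ← Finset.sum_mul, hΛ_sum, one_mul]

section AmplitudeDamping

variable {γ : ℝ}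

theorem ADC_eq (hγ0 : 0 ≤ γ) (hγ1 : γ ≤ 1) (ρ : Matrix (Fin 2) (Fin 2) ℂ) :
    ADC γ ρ = !![ρ 0 0 + γ * ρ 1 1, √(1 - γ) * ρ 0 1; √(1 - γ) * ρ 1 0, (1 - γ) * ρ 1 1] := by
  have hγ : ((√γ : ℝ) : ℂ) * (√γ : ℝ) = γ := by norm_cast; exact Real.mul_self_sqrt hγ0
  have h1γ : ((√(1 - γ) : ℝ) : ℂ) * (√(1 - γ) : ℝ) = 1 - γ := by
    norm_cast; exact Real.mul_self_sqrt (by linarith)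
  ext i j
  fin_cases i <;> fin_cases j <;>
    simp [ADC, K₀, K₁, mul_apply, Fin.sum_univ_two, vecMul, dotProduct] <;>
    first
      | ring1
      | linear_combination ρ 1 1 * hγ
      | linear_combination ρ 1 1 * h1γ

theorem ADC_sub (ρ ρ' : Matrix (Fin 2) (Fin 2) ℂ) : ADC γ (ρ - ρ') = ADC γ ρ - ADC γ ρ' := by
  simp only [ADC, Matrix.mul_sub, Matrix.sub_mul]
  abel

theorem trace_ADC (hγ0 : 0 ≤ γ) (hγ1 : γ ≤ 1) (ρ : Matrix (Fin 2) (Fin 2) ℂ) :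
    (ADC γ ρ).trace = ρ.trace := by
  rw [ADC_eq hγ0 hγ1, trace_fin_two_of, trace_fin_two]
  ring

theorem Matrix.PosSemidef.ADC {ρ : Matrix (Fin 2) (Fin 2) ℂ} (hρ : ρ.PosSemidef) :
    (ADC γ ρ).PosSemidef :=
  (hρ.mul_mul_conjTranspose_same (K₀ γ)).add (hρ.mul_mul_conjTranspose_same (K₁ γ))

theorem ADC_ρPlus_sub_ρMinus (hγ0 : 0 ≤ γ) (hγ1 : γ ≤ 1) :
    ADC γ (ρPlus - ρMinus) = √(1 - γ) • (ρPlus - ρMinus) := by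
  rw [ADC_eq hγ0 hγ1]
  ext i j
  fin_cases i <;> fin_cases j <;> simp [ρPlus, ρMinus] <;> ring

theorem posSemidef_ρPlus : ρPlus.PosSemidef := by
  have h : !![1, 1; 1, 1] = vecMulVec ![1, 1] (star ![1, 1] : Fin 2 → ℂ) := by
    ext i j; fin_cases i <;> fin_cases j <;> simp [vecMulVec]
  rw [ρPlus, h]
  exact (posSemidef_vecMulVec_self_star _).smul (by norm_num [Complex.le_def])

theorem posSemidef_ρMinus : ρMinus.PosSemidef := by
  have h : !![1, -1; -1, 1] = vecMulVec ![1, -1] (star ![1, -1] : Fin 2 → ℂ) := by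
    ext i j; fin_cases i <;> fin_cases j <;> simp [vecMulVec]
  rw [ρMinus, h]
  exact (posSemidef_vecMulVec_self_star _).smul (by norm_num [Complex.le_def])

theorem posSemidef_ρbit (i : Fin 2) : (ρbit i).PosSemidef := by
  unfold ρbit
  split
  exacts [posSemidef_ρPlus, posSemidef_ρMinus]

theorem sum_ρbit : ∑ i, ρbit i = 1 := by
  ext i j
  fin_cases i <;> fin_cases j <;> simp [Fin.sum_univ_two, ρbit, ρPlus, ρMinus] <;> norm_num

theorem trace_ρbit_mul_ADC_ρbit (hγ0 : 0 ≤ γ) (hγ1 : γ ≤ 1) (i : Fin 2) :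
    (ρbit i * ADC γ (ρbit i)).trace = ((1 + √(1 - γ)) / 2 : ℝ) := by
  rw [ADC_eq hγ0 hγ1]
  fin_cases i <;> simp [ρbit, ρPlus, ρMinus, trace_fin_two] <;> ring

noncomputable def dualCertificate (γ : ℝ) : Matrix (Fin 2) (Fin 2) ℂ :=
  ADC γ ρPlus + √(1 - γ) • ρMinus

theorem trace_dualCertificate (hγ0 : 0 ≤ γ) (hγ1 : γ ≤ 1) :
    (dualCertificate γ).trace = ((1 + √(1 - γ) : ℝ) : ℂ) := by
  have hPlus : ρPlus.trace = 1 := by norm_num [ρPlus, trace_fin_two]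
  have hMinus : ρMinus.trace = 1 := by norm_num [ρMinus, trace_fin_two]
  rw [dualCertificate, trace_add, trace_smul, trace_ADC hγ0 hγ1, hPlus, hMinus]
  simp

theorem posSemidef_dualCertificate_sub_ADC_ρbit (hγ0 : 0 ≤ γ) (hγ1 : γ ≤ 1) (i : Fin 2) :
    (dualCertificate γ - ADC γ (ρbit i)).PosSemidef := by
  have hs := Real.sqrt_nonneg (1 - γ)
  fin_cases i
  · simpa [ρbit, dualCertificate] using posSemidef_ρMinus.smul hs
  · have : dualCertificate γ - ADC γ ρMinus = √(1 - γ) • ρPlus := by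
      rw [dualCertificate, add_sub_right_comm, ← ADC_sub, ADC_ρPlus_sub_ρMinus hγ0 hγ1, smul_sub,
        sub_add_cancel]
    simpa [ρbit, this] using posSemidef_ρPlus.smul hs

end AmplitudeDamping

theorem Pind_eq_piKronecker (n : ℕ) (x : Fin n → Fin 2) :
    Pind n x = piKronecker fun j => ρbit (x j) := rfl

theorem σout_eq_piKronecker (γ : ℝ) (n : ℕ) (x : Fin n → Fin 2) :
    σout γ n x = piKronecker fun j => ADC γ (ρbit (x j)) := rfl

theorem re_trace_Pind_mul_σout {γ : ℝ} (hγ0 : 0 ≤ γ) (hγ1 : γ ≤ 1) {n : ℕ} (x : Fin n → Fin 2) :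
    (Pind n x * σout γ n x).trace.re = ((1 + √(1 - γ)) / 2) ^ n := by
  rw [Pind_eq_piKronecker, σout_eq_piKronecker, piKronecker_mul, trace_piKronecker]
  simp only [Pi.mul_apply, trace_ρbit_mul_ADC_ρbit hγ0 hγ1, Finset.prod_const, Finset.card_univ,
    Fintype.card_fin, ← Complex.ofReal_pow, Complex.ofReal_re]

theorem stmt12_general (γ : ℝ) (hγ0 : 0 ≤ γ) (hγ1 : γ ≤ 1) (n : ℕ) :
    IsGreatest
      {v : ℝ | ∃ Λ : (Fin n → Fin 2) → Matrix (Fin n → Fin 2) (Fin n → Fin 2) ℂ,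
        (∀ x, (Λ x).PosSemidef) ∧ (∑ x, Λ x = 1) ∧
        v = ((2 : ℝ) ^ n)⁻¹ * ∑ x, (Λ x * σout γ n x).trace.re}
      (((1 + Real.sqrt (1 - γ)) / 2) ^ n) := by
  refine ⟨⟨Pind n, fun x => .piKronecker fun j => posSemidef_ρbit (x j), ?_, ?_⟩, ?_⟩
  · simp_rw [Pind_eq_piKronecker]
    rw [sum_piKronecker fun _ => ρbit, sum_ρbit, piKronecker_one]
  · simp [re_trace_Pind_mul_σout hγ0 hγ1, div_pow]
  · rintro v ⟨Λ, hΛ, hΛ_sum, rfl⟩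
    have h := sum_re_trace_mul_le_re_trace hΛ hΛ_sum fun x =>
      posSemidef_piKronecker_sub_piKronecker (fun j => (posSemidef_ρbit (x j)).ADC)
        fun j => posSemidef_dualCertificate_sub_ADC_ρbit hγ0 hγ1 (x j)
    rw [trace_piKronecker] at h
    simp only [trace_dualCertificate hγ0 hγ1, Finset.prod_const, Finset.card_univ, Fintype.card_fin,
      ← Complex.ofReal_pow, Complex.ofReal_re] at h
    calc ((2 : ℝ) ^ n)⁻¹ * ∑ x, (Λ x * σout γ n x).trace.re
        ≤ ((2 : ℝ) ^ n)⁻¹ * (1 + √(1 - γ)) ^ n := by gcongr; exact h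
      _ = ((1 + √(1 - γ)) / 2) ^ n := by rw [div_pow, inv_mul_eq_div]

/-- uncoded collective optimum equals individual-measurement performance: the
supremum over all POVMs on `ℂ^{2ⁿ}` of the average success probability of the uncoded scheme
with inputs `ρ₊, ρ₋` over `n` uses of the ADC equals `((1 + √(1−γ))/2)ⁿ`, the `n`-th power of
the optimal single-use success probability (and it is attained). -/
theorem stmt12 (γ : ℝ) (hγ0 : 0 ≤ γ) (hγ1 : γ ≤ 1) (n : ℕ) (hn : 1 ≤ n) :
    IsGreatest
      {v : ℝ | ∃ Λ : (Fin n → Fin 2) → Matrix (Fin n → Fin 2) (Fin n → Fin 2) ℂ,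
        (∀ x, (Λ x).PosSemidef) ∧ (∑ x, Λ x = 1) ∧
        v = ((2 : ℝ) ^ n)⁻¹ * ∑ x, (Λ x * σout γ n x).trace.re}
      (((1 + Real.sqrt (1 - γ)) / 2) ^ n) :=
  stmt12_general γ hγ0 hγ1 n
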